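/- arXiv:2111.10162 — 3 statements merged into one kernel-verified Lean document; each statement's English description precedes it below -/
import Mathlib

section
/- Let k ≥ 2 be an integer, let C be a linear code of length n over Z_k, let g be a positive integer, let A be a commutative ring, and let X be a family of elements of A indexed by pairs (K, L) with K ∈ ([g+1] choose p), L ∈ (Z_k\{0})^p, 1 ≤ p ≤ g+1. Then the (g+1)-th intersection enumerator satisfies I_C^{(g+1)}(X) = ∑_{v ∈ C} Jac^{(g)}_{C,v}(X restricted to K ≠ (g+1)) · ∏_{ℓ ∈ Z_k\{0}} X_{(g+1),(ℓ)}^{wt_ℓ(v)}, where Jac^{(g)}_{C,v} uses the given variables X_{K,L} for all K other than the singleton (g+1) and takes X_{(g+1),(ℓ)} := 1. -/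
open scoped Classical

/-- The `m`-th intersection enumerator `I_C^{(m)}(X)`; a pair `(K, L)` with
`K ∈ ([m] choose p)`, `L ∈ (R \ {0})^p` is encoded as the nonzero vector
`b : Fin m → R` with support `K` and values `L`. -/
noncomputable def IEnum {R : Type*} [CommRing R] [Fintype R] {A : Type*} [CommRing A]
    {n : ℕ} (C : Submodule R (Fin n → R)) (m : ℕ) (X : (Fin m → R) → A) : A :=
  ∑ u : Fin m → ↥C, ∏ b ∈ Finset.univ.filter (fun b : Fin m → R => b ≠ 0),
    X b ^ (Finset.univ.filter
        (fun i : Fin n => ∀ j, b j ≠ 0 → (u j : Fin n → R) i = b j)).card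

/-- The `g`-th inhomogeneous Jacobi polynomial `Jac^{(g)}_{C,v}(X)`, with the
convention `X_{(g+1),(j)} := 1` realised by replacing `X b` by `1` whenever the
support of `b` is contained in `{g+1}` (the last index). -/
noncomputable def JacInhom {R : Type*} [CommRing R] [Fintype R] {A : Type*} [CommRing A]
    {n g : ℕ} (C : Submodule R (Fin n → R)) (v : Fin n → R)
    (X : (Fin (g+1) → R) → A) : A :=
  ∑ u : Fin g → ↥C, ∏ b ∈ Finset.univ.filter (fun b : Fin (g+1) → R => b ≠ 0),
    (if ∀ j : Fin g, b j.castSucc = 0 then 1 else X b) ^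
      (Finset.univ.filter (fun i : Fin n =>
        (∀ j : Fin g, b j.castSucc ≠ 0 → (u j : Fin n → R) i = b j.castSucc) ∧
        (b (Fin.last g) ≠ 0 → v i = b (Fin.last g)))).card


private def snocEquivC (γ : Type*) (g : ℕ) : ((Fin g → γ) × γ) ≃ (Fin (g+1) → γ) where
  toFun p := Fin.snoc p.1 p.2
  invFun w := (fun j => w j.castSucc, w (Fin.last g))
  left_inv p := by
    refine Prod.ext ?_ ?_
    · funext j
      simp
    · simp
  right_inv w := by
    funext j
    refine Fin.lastCases ?_ (fun i => ?_) j
    · exact Fin.snoc_last _ _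
    · exact Fin.snoc_castSucc _ _ _

private lemma prod_split {k : ℕ} [NeZero k] {A : Type*} [CommRing A] {n g : ℕ}
    (X : (Fin (g+1) → ZMod k) → A) (u : Fin g → (Fin n → ZMod k)) (v : Fin n → ZMod k)
    (Db : DecidablePred (fun b : Fin (g+1) → ZMod k => b ≠ 0))
    (Dc : ∀ b : Fin (g+1) → ZMod k, Decidable (∀ j : Fin g, b j.castSucc = 0))
    (DN : ∀ b : Fin (g+1) → ZMod k, DecidablePred
      (fun i : Fin n => ∀ j, b j ≠ 0 → Fin.snoc (α := fun _ => Fin n → ZMod k) u v j i = b j))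
    (DM : ∀ b : Fin (g+1) → ZMod k, DecidablePred (fun i : Fin n =>
      (∀ j : Fin g, b j.castSucc ≠ 0 → u j i = b j.castSucc) ∧
      (b (Fin.last g) ≠ 0 → v i = b (Fin.last g))))
    (Dl : DecidablePred (fun ℓ : ZMod k => ℓ ≠ 0))
    (Dw : ∀ ℓ : ZMod k, DecidablePred (fun i : Fin n => v i = ℓ)) :
    (∏ b ∈ @Finset.filter _ _ Db Finset.univ,
      X b ^ (@Finset.filter _ _ (DN b) Finset.univ).card)
    = (∏ b ∈ @Finset.filter _ _ Db Finset.univ,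
        (@ite _ (∀ j : Fin g, b j.castSucc = 0) (Dc b) (1:A) (X b)) ^
          (@Finset.filter _ _ (DM b) Finset.univ).card) *
      ∏ ℓ ∈ @Finset.filter _ _ Dl Finset.univ,
        X (fun i => if i = Fin.last g then ℓ else 0) ^
          (@Finset.filter _ _ (Dw ℓ) Finset.univ).card := by
  have key : ∀ b : Fin (g+1) → ZMod k,
      @Finset.filter _ _ (DN b) Finset.univ = @Finset.filter _ _ (DM b) Finset.univ := by
    intro b
    ext i
    simp only [Finset.mem_filter, Finset.mem_univ, true_and]
    rw [Fin.forall_fin_succ'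
      (P := fun j => b j ≠ 0 → Fin.snoc (α := fun _ => Fin n → ZMod k) u v j i = b j)]
    simp [Fin.snoc_castSucc, Fin.snoc_last]
  have hL : (∏ b ∈ @Finset.filter _ _ Db Finset.univ,
      X b ^ (@Finset.filter _ _ (DN b) Finset.univ).card)
      = ∏ b ∈ @Finset.filter _ _ Db Finset.univ,
        X b ^ (@Finset.filter _ _ (DM b) Finset.univ).card :=
    Finset.prod_congr rfl fun b _ => by rw [key b]
  rw [hL]
  haveI dp : DecidablePred (fun b : Fin (g+1) → ZMod k => ∀ j : Fin g, b j.castSucc = 0) := Dc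
  rw [← Finset.prod_filter_mul_prod_filter_not (@Finset.filter _ _ Db Finset.univ)
        (fun b => ∀ j : Fin g, b j.castSucc = 0)
        (fun b => X b ^ (@Finset.filter _ _ (DM b) Finset.univ).card),
      ← Finset.prod_filter_mul_prod_filter_not (@Finset.filter _ _ Db Finset.univ)
        (fun b => ∀ j : Fin g, b j.castSucc = 0)
        (fun b => (@ite _ (∀ j : Fin g, b j.castSucc = 0) (Dc b) (1:A) (X b)) ^
          (@Finset.filter _ _ (DM b) Finset.univ).card)]
  have hB1 : (∏ b ∈ (@Finset.filter _ _ Db Finset.univ).filter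
        (fun b => ∀ j : Fin g, b j.castSucc = 0),
      (@ite _ (∀ j : Fin g, b j.castSucc = 0) (Dc b) (1:A) (X b)) ^
        (@Finset.filter _ _ (DM b) Finset.univ).card) = 1 := by
    refine Finset.prod_eq_one fun b hb => ?_
    rw [if_pos (Finset.mem_filter.mp hb).2, one_pow]
  have hB2 : (∏ b ∈ (@Finset.filter _ _ Db Finset.univ).filter
        (fun b => ¬ ∀ j : Fin g, b j.castSucc = 0),
      (@ite _ (∀ j : Fin g, b j.castSucc = 0) (Dc b) (1:A) (X b)) ^
        (@Finset.filter _ _ (DM b) Finset.univ).card)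
      = ∏ b ∈ (@Finset.filter _ _ Db Finset.univ).filter
          (fun b => ¬ ∀ j : Fin g, b j.castSucc = 0),
        X b ^ (@Finset.filter _ _ (DM b) Finset.univ).card := by
    refine Finset.prod_congr rfl fun b hb => ?_
    rw [if_neg (Finset.mem_filter.mp hb).2]
  have hB3 : (∏ b ∈ (@Finset.filter _ _ Db Finset.univ).filter
        (fun b => ∀ j : Fin g, b j.castSucc = 0),
      X b ^ (@Finset.filter _ _ (DM b) Finset.univ).card)
      = ∏ ℓ ∈ @Finset.filter _ _ Dl Finset.univ,
        X (fun i => if i = Fin.last g then ℓ else 0) ^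
          (@Finset.filter _ _ (Dw ℓ) Finset.univ).card := by
    refine Finset.prod_bij' (fun b _ => b (Fin.last g))
      (fun ℓ _ => fun i => if i = Fin.last g then ℓ else 0) ?_ ?_ ?_ ?_ ?_
    · intro b hb
      obtain ⟨hbS, hP⟩ := Finset.mem_filter.mp hb
      have hb0 : b ≠ 0 := (Finset.mem_filter.mp hbS).2
      refine Finset.mem_filter.mpr ⟨Finset.mem_univ _, fun h => hb0 ?_⟩
      funext j
      exact Fin.lastCases h hP j
    · intro ℓ hℓ
      have hℓ0 : ℓ ≠ 0 := (Finset.mem_filter.mp hℓ).2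
      refine Finset.mem_filter.mpr ⟨Finset.mem_filter.mpr ⟨Finset.mem_univ _, fun h => hℓ0 ?_⟩,
        fun j => if_neg (Fin.castSucc_lt_last j).ne⟩
      have := congrFun h (Fin.last g)
      simpa using this
    · intro b hb
      obtain ⟨hbS, hP⟩ := Finset.mem_filter.mp hb
      funext i
      refine Fin.lastCases ?_ ?_ i
      · show (if Fin.last g = Fin.last g then b (Fin.last g) else 0) = b (Fin.last g)
        rw [if_pos rfl]
      · intro j
        show (if j.castSucc = Fin.last g then b (Fin.last g) else 0) = b j.castSucc
        rw [if_neg (Fin.castSucc_lt_last j).ne, hP j]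
    · intro ℓ _
      show (if Fin.last g = Fin.last g then ℓ else 0) = ℓ
      rw [if_pos rfl]
    · intro b hb
      obtain ⟨hbS, hP⟩ := Finset.mem_filter.mp hb
      have hb0 : b ≠ 0 := (Finset.mem_filter.mp hbS).2
      have hlast : b (Fin.last g) ≠ 0 := by
        intro h
        apply hb0
        funext j
        exact Fin.lastCases h hP j
      have hbeq : b = fun i => if i = Fin.last g then b (Fin.last g) else 0 := by
        funext i
        refine Fin.lastCases ?_ ?_ i
        · rw [if_pos rfl]
        · intro j
          rw [if_neg (Fin.castSucc_lt_last j).ne, hP j]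
      have hMeq : @Finset.filter _ _ (DM b) Finset.univ
          = @Finset.filter _ _ (Dw (b (Fin.last g))) Finset.univ := by
        ext i
        simp only [Finset.mem_filter, Finset.mem_univ, true_and]
        constructor
        · exact fun h => h.2 hlast
        · intro h
          exact ⟨fun j hj => absurd (hP j) hj, fun _ => h⟩
      have goal : X b ^ (@Finset.filter _ _ (DM b) Finset.univ).card
          = X (fun i => if i = Fin.last g then b (Fin.last g) else 0) ^
            (@Finset.filter _ _ (Dw (b (Fin.last g))) Finset.univ).card := by
        rw [hMeq, ← hbeq]
      exact goal
  rw [hB1, one_mul, hB2, hB3, mul_comm]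

/-- **Theorem (InterJacobi)**, over `Z_k` (`k ≥ 2`).  The `(g+1)`-th intersection enumerator is
the sum over codewords `v ∈ C` of the `g`-th inhomogeneous Jacobi polynomial with
reference vector `v` (which takes `X_{(g+1),(ℓ)} := 1` and uses the given variables
otherwise), times `∏_{ℓ ≠ 0} X_{(g+1),(ℓ)}^{wt_ℓ(v)}`, where `X_{(g+1),(ℓ)}` is `X`
at the vector with `ℓ` in the last position and `0` elsewhere, and
`wt_ℓ(v) = #{i : v i = ℓ}`. -/
theorem intersection_eq_sum_jacobi_Zk
    (k : ℕ) (hk : 2 ≤ k) [NeZero k]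
    {A : Type*} [CommRing A]
    {n g : ℕ} (hg : 0 < g)
    (C : Submodule (ZMod k) (Fin n → (ZMod k)))
    (X : (Fin (g+1) → (ZMod k)) → A) :
    IEnum C (g+1) X
      = ∑ v : ↥C,
          JacInhom C (v : Fin n → (ZMod k)) X *
          ∏ ℓ ∈ Finset.univ.filter (fun ℓ : (ZMod k) => ℓ ≠ 0),
            X (fun i => if i = Fin.last g then ℓ else 0)
              ^ (Finset.univ.filter (fun i : Fin n => (v : Fin n → (ZMod k)) i = ℓ)).card := by
  classical
  rw [IEnum, ← Equiv.sum_comp (snocEquivC (↥C) g)]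
  rw [Fintype.sum_prod_type, Finset.sum_comm]
  simp only [JacInhom, Finset.sum_mul]
  refine Finset.sum_congr rfl fun v _ => ?_
  refine Finset.sum_congr rfl fun u _ => ?_
  have hco : ∀ j, ((snocEquivC (↥C) g (u, v) j : ↥C) : Fin n → ZMod k)
      = Fin.snoc (α := fun _ => Fin n → ZMod k)
          (fun j => ((u j : Fin n → ZMod k))) ((v : Fin n → ZMod k)) j := by
    intro j
    show (Subtype.val ∘ Fin.snoc u v) j = _
    rw [Fin.comp_snoc]
    rfl
  simp only [hco]
  exact prod_split X (fun j => (u j : Fin n → ZMod k)) (v : Fin n → ZMod k) _ _ _ _ _ _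
end

section
/- Let q be a prime power, let C be a linear code of length n over F_q, let g be a positive integer, let v ∈ F_q^n, and let χ : F_q → ℂ be a nontrivial additive character (a group homomorphism from the additive group of F_q to the nonzero complex numbers that is not identically 1). Let y : F_q^{g+1} → ℂ be any family. Then 𝔍ac^{(g)}_{C^⊥,v}(y) = |C|^{-g} · 𝔍ac^{(g)}_{C,v}(ỹ), where for a ∈ F_q^{g+1}, ỹ_a := ∑_{b_1,…,b_g ∈ F_q} χ(∑_{i=1}^{g} a_i b_i) · y_{(b_1,…,b_g,a_{g+1})}. -/
open scoped Classical

/-- The dual code `C^⊥ = {w | ∑ i, u i * w i = 0 for all u ∈ C}`. -/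
def dualCode {R : Type*} [CommRing R] {n : ℕ}
    (C : Submodule R (Fin n → R)) : Submodule R (Fin n → R) where
  carrier := {w | ∀ u ∈ C, ∑ i, u i * w i = 0}
  add_mem' := by
    intro a b ha hb u hu
    have h1 := ha u hu
    have h2 := hb u hu
    simp only [Pi.add_apply, mul_add, Finset.sum_add_distrib, h1, h2, add_zero]
  zero_mem' := by
    intro u hu
    simp
  smul_mem' := by
    intro c w hw u hu
    have h := hw u hu
    show ∑ i, u i * (c • w) i = 0
    have : (∑ i, u i * (c • w) i) = c * ∑ i, u i * w i := by
      rw [Finset.mul_sum]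
      refine Finset.sum_congr rfl fun i _ => ?_
      simp only [Pi.smul_apply, smul_eq_mul]
      ring
    rw [this, h, mul_zero]

/-- The `g`-th homogeneous Jacobi polynomial `𝔍ac^{(g)}_{C,v}(y)`: the sum ranges
over all `g`-tuples of (not necessarily distinct) codewords; for
`a : Fin (g+1) → R`, the exponent of `y a` is `n_a(u_1,…,u_g,v)`, the number of
coordinates `i` with `(u_1 i, …, u_g i, v i) = a`. -/
noncomputable def JacHom {R : Type*} [CommRing R] [Fintype R]
    {n g : ℕ} (C : Submodule R (Fin n → R)) (v : Fin n → R)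
    (y : (Fin (g+1) → R) → ℂ) : ℂ :=
  ∑ u : Fin g → ↥C, ∏ a : Fin (g+1) → R,
    y a ^ (Finset.univ.filter (fun i : Fin n =>
      (∀ j : Fin g, (u j : Fin n → R) i = a j.castSucc) ∧ v i = a (Fin.last g))).card

/-!
Writing `𝔍ac` as `∑ u ∏ᵢ y(u₁ i, …, u_g i, v i)` and expanding every `ỹ` as a sum, the
right-hand side becomes a sum over `g`-tuples of words `w` weighted by
`∑_{u ∈ C^g} χ(∑ⱼ uⱼ ⬝ wⱼ)`. This weight factors into `g` character sums over `C`, and by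
orthogonality each equals `|C|` if `wⱼ ∈ C^⊥` and `0` otherwise, so exactly the tuples of
`(C^⊥)^g` survive, each with weight `|C|^g`.
-/

open Finset Matrix

namespace AddChar

variable {A M : Type*} [AddCommMonoid A] [CommMonoid M]

lemma map_sum_eq_prod {ι : Type*} (ψ : AddChar A M) (s : Finset ι) (f : ι → A) :
    ψ (∑ i ∈ s, f i) = ∏ i ∈ s, ψ (f i) := by
  induction s using Finset.cons_induction with
  | empty => simp
  | cons a s _ ih => rw [sum_cons, prod_cons, map_add_eq_mul, ih]

end AddChar

section CharacterSums

variable {K R : Type*} [Field K] [CommRing R]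

/-- A nonzero linear functional `φ : V → K` is surjective, so `χ ∘ φ` is a nontrivial
character of `V` exactly when `φ ≠ 0`. -/
lemma sum_addChar_linearMap [IsDomain R] {V : Type*} [AddCommGroup V] [Module K V]
    [Fintype V] (χ : AddChar K R) (hχ : χ ≠ 1) (φ : V →ₗ[K] K) :
    ∑ x, χ (φ x) = if φ = 0 then (Fintype.card V : R) else 0 := by
  have hψ : χ.compAddMonoidHom φ.toAddMonoidHom = 0 ↔ φ = 0 := by
    refine ⟨fun h => by_contra fun hφ => ?_, fun h => by ext; simp [h]⟩
    obtain ⟨t, ht⟩ := AddChar.ne_one_iff.1 hχ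
    obtain ⟨x, rfl⟩ := LinearMap.surjective_of_ne_zero hφ t
    exact ht (by simpa using DFunLike.congr_fun h x)
  simpa only [AddChar.compAddMonoidHom_apply, LinearMap.toAddMonoidHom_coe, hψ] using
    (χ.compAddMonoidHom φ.toAddMonoidHom).sum_eq_ite

variable {n : ℕ}

lemma sum_addChar_dotProduct [Fintype K] [IsDomain R] (C : Submodule K (Fin n → K))
    (χ : AddChar K R) (hχ : χ ≠ 1) (w : Fin n → K) :
    ∑ u : C, χ ((u : Fin n → K) ⬝ᵥ w)
      = if w ∈ dualCode C then (Fintype.card C : R) else 0 := by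
  have hmem : (dotProductBilin K K).flip w ∘ₗ C.subtype = 0 ↔ w ∈ dualCode C := by
    simp [LinearMap.ext_iff, dualCode, dotProduct]
  simpa only [LinearMap.comp_apply, LinearMap.flip_apply, dotProductBilin_apply_apply,
    Submodule.subtype_apply, hmem] using
    sum_addChar_linearMap χ hχ ((dotProductBilin K K).flip w ∘ₗ C.subtype)

lemma sum_pi_addChar_dotProduct [Fintype K] [IsDomain R] {ι : Type*} [Fintype ι]
    [DecidableEq ι] (C : Submodule K (Fin n → K)) (χ : AddChar K R) (hχ : χ ≠ 1)
    (w : ι → Fin n → K) :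
    ∑ u : ι → C, χ (∑ j, (u j : Fin n → K) ⬝ᵥ w j)
      = if ∀ j, w j ∈ dualCode C then (Fintype.card C : R) ^ Fintype.card ι else 0 := by
  simp_rw [AddChar.map_sum_eq_prod]
  rw [← Fintype.prod_sum fun j (c : C) => χ ((c : Fin n → K) ⬝ᵥ w j)]
  simp_rw [sum_addChar_dotProduct C χ hχ, Fintype.prod_ite_zero, prod_const, card_univ]

lemma prod_sum_addChar_mul_eq [Fintype K] {ι κ : Type*} [Fintype ι] [DecidableEq ι]
    [Fintype κ] [DecidableEq κ] (χ : AddChar K R) (u : ι → κ → K) (Y : κ → (ι → K) → R) :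
    ∏ i, ∑ c : ι → K, χ (∑ j, u j i * c j) * Y i c
      = ∑ w : ι → κ → K, χ (∑ j, u j ⬝ᵥ w j) * ∏ i, Y i (fun j => w j i) := by
  rw [Fintype.prod_sum]
  refine Fintype.sum_equiv (Equiv.piComm fun _ _ => K) _ _ fun B => ?_
  rw [prod_mul_distrib, ← AddChar.map_sum_eq_prod, sum_comm]
  rfl

end CharacterSums

lemma sum_pi_subtype_eq_sum_filter {ι α M : Type*} [Fintype ι] [DecidableEq ι] [Fintype α]
    [AddCommMonoid M] (p : α → Prop) [DecidablePred p]
    [DecidablePred fun w : ι → α => ∀ j, p (w j)] (F : (ι → α) → M) :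
    ∑ w : ι → Subtype p, F (fun j => w j) = ∑ w with ∀ j, p (w j), F w := by
  rw [sum_subtype (p := fun w => ∀ j, p (w j)) _ (fun w => by simp) F]
  exact Fintype.sum_equiv (Equiv.subtypePiEquivPi (p := fun _ => p)).symm _ _ fun _ => rfl

lemma jacHom_eq_sum_prod {R : Type*} [CommRing R] [Fintype R] {n g : ℕ}
    (C : Submodule R (Fin n → R)) (v : Fin n → R) (y : (Fin (g+1) → R) → ℂ) :
    JacHom C v y
      = ∑ u : Fin g → C, ∏ i, y (Fin.snoc (fun j => (u j : Fin n → R) i) (v i)) := by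
  refine sum_congr rfl fun u _ => ?_
  have hfiber : ∀ (a : Fin (g+1) → R) (i : Fin n),
      ((∀ j, (u j : Fin n → R) i = a j.castSucc) ∧ v i = a (Fin.last g))
        ↔ Fin.snoc (fun j => (u j : Fin n → R) i) (v i) = a := by
    intro a i
    rw [← Fin.snoc_init_self a, Fin.snoc_inj, funext_iff]
    simp [Fin.init, eq_comm]
  simp_rw [hfiber, ← prod_const, prod_fiberwise']

theorem macwilliams_homogeneous_Fq_general
    {Fq : Type*} [Field Fq] [Fintype Fq]
    {n g : ℕ}
    (C : Submodule Fq (Fin n → Fq)) (v : Fin n → Fq)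
    (χ : AddChar Fq ℂ) (hχ : χ ≠ 1)
    (y : (Fin (g+1) → Fq) → ℂ) :
    JacHom (dualCode C) v y
      = (1 / (Fintype.card ↥C : ℂ) ^ g) *
        JacHom C v (fun a => ∑ c : Fin g → Fq,
          χ (∑ i : Fin g, a i.castSucc * c i) * y (Fin.snoc c (a (Fin.last g)))) := by
  set P : (Fin g → Fin n → Fq) → ℂ := fun w => ∏ i, y (Fin.snoc (fun j => w j i) (v i))
  have hcard : (Fintype.card C : ℂ) ^ g ≠ 0 :=
    pow_ne_zero _ (Nat.cast_ne_zero.2 Fintype.card_ne_zero)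
  calc JacHom (dualCode C) v y = ∑ w with ∀ j, w j ∈ dualCode C, P w := by
        rw [jacHom_eq_sum_prod]
        exact sum_pi_subtype_eq_sum_filter (· ∈ dualCode C) P
    _ = 1 / (Fintype.card C : ℂ) ^ g *
          ∑ w, (∑ u : Fin g → C, χ (∑ j, (u j : Fin n → Fq) ⬝ᵥ w j)) * P w := by
        simp_rw [sum_pi_addChar_dotProduct C χ hχ, Fintype.card_fin, ite_mul, zero_mul,
          ← sum_filter, ← mul_sum, one_div, inv_mul_cancel_left₀ hcard]
    _ = _ := by
        rw [jacHom_eq_sum_prod]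
        simp only [Fin.snoc_castSucc, Fin.snoc_last, prod_sum_addChar_mul_eq, sum_mul]
        rw [sum_comm]

/-- **Theorem (MacHomo)**: MacWilliams type identity for the homogeneous Jacobi
polynomial over a finite field `F_q` (an arbitrary finite field, since `q` ranges
over all prime powers).  `χ` is a nontrivial additive character of `F_q`, and
`ỹ a := ∑_{b_1,…,b_g} χ(∑ a_i b_i) y_{(b_1,…,b_g,a_{g+1})}`. -/
theorem macwilliams_homogeneous_Fq
    {Fq : Type*} [Field Fq] [Fintype Fq]
    {n g : ℕ} (hg : 0 < g)
    (C : Submodule Fq (Fin n → Fq)) (v : Fin n → Fq)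
    (χ : AddChar Fq ℂ) (hχ : χ ≠ 1)
    (y : (Fin (g+1) → Fq) → ℂ) :
    JacHom (dualCode C) v y
      = (1 / (Fintype.card ↥C : ℂ) ^ g) *
        JacHom C v (fun a => ∑ c : Fin g → Fq,
          χ (∑ i : Fin g, a i.castSucc * c i) * y (Fin.snoc c (a (Fin.last g)))) :=
  macwilliams_homogeneous_Fq_general C v χ hχ y
end

section
/- Let k ≥ 2 be an integer, let C be a linear code of length n over Z_k, let g be a positive integer, let v ∈ (Z_k)^n, and let χ : Z_k → ℂ be the additive character defined by χ(α) := e^{2πiα/k} (α lifted to an integer representative). Let y : (Z_k)^{g+1} → ℂ be any family. Then 𝔍ac^{(g)}_{C^⊥,v}(y) = |C|^{-g} · 𝔍ac^{(g)}_{C,v}(ỹ), where for a ∈ (Z_k)^{g+1}, ỹ_a := ∑_{b_1,…,b_g ∈ Z_k} χ(∑_{i=1}^{g} a_i b_i) · y_{(b_1,…,b_g,a_{g+1})}. -/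
set_option linter.unusedSectionVars false
set_option linter.unusedVariables false
set_option maxHeartbeats 1000000


open scoped Classical

/-- The additive character `χ(α) = e^{2πiα/k}` of `Z_k` (with `α` lifted to its
integer representative `α.val`). -/
noncomputable def zmodChar (k : ℕ) (α : ZMod k) : ℂ :=
  Complex.exp (2 * Real.pi * Complex.I * (α.val : ℂ) / (k : ℂ))

section char
variable {k : ℕ} [NeZero k]

lemma zmodChar_eq_pow (α : ZMod k) :
    zmodChar k α = Complex.exp (2 * Real.pi * Complex.I / k) ^ α.val := by
  rw [zmodChar, ← Complex.exp_nat_mul]; ring_nf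

lemma zeta_pow_k : Complex.exp (2 * Real.pi * Complex.I / (k : ℂ)) ^ k = 1 := by
  rw [← Complex.exp_nat_mul]
  have hk : (k : ℂ) ≠ 0 := Nat.cast_ne_zero.2 (NeZero.ne k)
  rw [← mul_div_assoc, mul_div_cancel_left₀ _ hk]
  exact Complex.exp_two_pi_mul_I

lemma zmodChar_zero : zmodChar k 0 = 1 := by simp [zmodChar]

lemma zmodChar_add (a b : ZMod k) :
    zmodChar k (a + b) = zmodChar k a * zmodChar k b := by
  rw [zmodChar_eq_pow, zmodChar_eq_pow, zmodChar_eq_pow, ← pow_add, ZMod.val_add,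
    ← pow_eq_pow_mod _ zeta_pow_k]

lemma zmodChar_eq_one_iff (α : ZMod k) : zmodChar k α = 1 ↔ α = 0 := by
  rw [zmodChar_eq_pow]
  constructor
  · intro h
    have hp := Complex.isPrimitiveRoot_exp k (NeZero.ne k)
    have hdvd : k ∣ α.val := (IsPrimitiveRoot.pow_eq_one_iff_dvd hp _).1 h
    exact (ZMod.val_eq_zero α).1 (Nat.eq_zero_of_dvd_of_lt hdvd (ZMod.val_lt α))
  · intro h; simp [h, ZMod.val_zero]

lemma zmodChar_sum {ι : Type*} (s : Finset ι) (f : ι → ZMod k) :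
    zmodChar k (∑ i ∈ s, f i) = ∏ i ∈ s, zmodChar k (f i) := by
  induction s using Finset.cons_induction with
  | empty => simp [zmodChar_zero]
  | cons a s ha ih => rw [Finset.sum_cons, Finset.prod_cons, zmodChar_add, ih]

lemma char_sum_code {n : ℕ} (C : Submodule (ZMod k) (Fin n → ZMod k))
    (x : Fin n → ZMod k) :
    ∑ u : ↥C, zmodChar k (∑ i, (u : Fin n → ZMod k) i * x i)
      = if x ∈ dualCode C then (Fintype.card ↥C : ℂ) else 0 := by
  by_cases hx : x ∈ dualCode C
  · rw [if_pos hx]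
    rw [Finset.sum_congr rfl (fun u _ => by
      rw [hx (u : Fin n → ZMod k) u.2, zmodChar_zero])]
    simp
  · rw [if_neg hx]
    have hex : ∃ u₀ ∈ C, ∑ i, u₀ i * x i ≠ 0 := by
      by_contra h; push_neg at h; exact hx h
    obtain ⟨u₀, hu₀C, hu₀⟩ := hex
    set S := ∑ u : ↥C, zmodChar k (∑ i, (u : Fin n → ZMod k) i * x i) with hS
    have hadd : ∀ u : ↥C, (∑ i, u₀ i * x i) + (∑ i, (u : Fin n → ZMod k) i * x i)
        = ∑ i, (((⟨u₀, hu₀C⟩ + u : ↥C) : Fin n → ZMod k) i * x i) := by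
      intro u
      rw [← Finset.sum_add_distrib]
      refine Finset.sum_congr rfl fun i _ => ?_
      have h1 : (((⟨u₀, hu₀C⟩ + u : ↥C) : Fin n → ZMod k)) i
          = u₀ i + (u : Fin n → ZMod k) i := rfl
      rw [h1]; ring
    have key : zmodChar k (∑ i, u₀ i * x i) * S = S := by
      calc zmodChar k (∑ i, u₀ i * x i) * S
          = ∑ u : ↥C, zmodChar k (∑ i, u₀ i * x i)
              * zmodChar k (∑ i, (u : Fin n → ZMod k) i * x i) := by
            rw [hS, Finset.mul_sum]
        _ = ∑ u : ↥C, zmodChar k (∑ i,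
              (((⟨u₀, hu₀C⟩ + u : ↥C) : Fin n → ZMod k) i * x i)) :=
            Finset.sum_congr rfl fun u _ => by rw [← zmodChar_add, hadd u]
        _ = S := Fintype.sum_equiv (Equiv.addLeft (⟨u₀, hu₀C⟩ : ↥C)) _ _ (fun u => rfl)
    have hne : zmodChar k (∑ i, u₀ i * x i) ≠ 1 :=
      fun h => hu₀ ((zmodChar_eq_one_iff _).1 h)
    have h0 : (zmodChar k (∑ i, u₀ i * x i) - 1) * S = 0 := by
      rw [sub_mul, one_mul, key, sub_self]
    rcases mul_eq_zero.1 h0 with h | h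
    · exact absurd (sub_eq_zero.1 h) hne
    · exact h
end char

lemma jac_prod {R : Type*} [CommRing R] [Fintype R] {n g : ℕ} (v : Fin n → R)
    (y : (Fin (g+1) → R) → ℂ) (w : Fin g → (Fin n → R)) :
    (∏ a : Fin (g+1) → R, y a ^ (Finset.univ.filter (fun i : Fin n =>
      (∀ j : Fin g, w j i = a j.castSucc) ∧ v i = a (Fin.last g))).card)
    = ∏ i : Fin n, y (Fin.snoc (fun j => w j i) (v i)) := by
  rw [← Finset.prod_fiberwise Finset.univ
    (fun i : Fin n => (Fin.snoc (fun j => w j i) (v i) : Fin (g+1) → R))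
    (fun i : Fin n => y (Fin.snoc (fun j => w j i) (v i)))]
  refine Finset.prod_congr rfl fun a _ => ?_
  have hfil : (Finset.univ.filter
      (fun i : Fin n => (Fin.snoc (fun j => w j i) (v i) : Fin (g+1) → R) = a))
      = Finset.univ.filter (fun i : Fin n =>
        (∀ j : Fin g, w j i = a j.castSucc) ∧ v i = a (Fin.last g)) := by
    refine Finset.filter_congr fun i _ => ?_
    constructor
    · intro h
      refine ⟨fun j => ?_, ?_⟩
      · rw [← h, Fin.snoc_castSucc]
      · rw [← h, Fin.snoc_last]
    · rintro ⟨h1, h2⟩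
      funext j'
      refine Fin.lastCases ?_ ?_ j'
      · rw [Fin.snoc_last, h2]
      · intro j; rw [Fin.snoc_castSucc, h1 j]
  rw [Finset.prod_congr rfl (fun i hi => by
    rw [(Finset.mem_filter.1 hi).2])]
  rw [Finset.prod_const, hfil]

lemma sum_pi_subtype {G V : Type*} [DecidableEq G] [Fintype G] [Fintype V]
    (p : V → Prop) [DecidablePred p]
    (q : (G → V) → Prop) [DecidablePred q] (hq : ∀ z, q z ↔ ∀ j, p (z j))
    (F : (G → V) → ℂ) :
    ∑ w : G → {x // p x}, F (fun j => (w j : V))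
      = ∑ z ∈ Finset.univ.filter q, F z := by
  classical
  rw [Finset.sum_subtype (p := q) _ (by simp) F]
  exact Fintype.sum_equiv
    ((Equiv.subtypePiEquivPi (p := fun _ b => p b)).symm.trans
      (Equiv.subtypeEquivRight (fun z => (hq z).symm))) _ _ (fun w => rfl)

/-- **Theorem (MacHomo)**: MacWilliams type identity for the homogeneous Jacobi
polynomial over `Z_k` (`k ≥ 2`), with the character `χ(α) = e^{2πiα/k}` and
`ỹ a := ∑_{b_1,…,b_g} χ(∑ a_i b_i) y_{(b_1,…,b_g,a_{g+1})}`. -/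
theorem macwilliams_homogeneous_Zk
    (k : ℕ) (hk : 2 ≤ k) [NeZero k]
    {n g : ℕ} (hg : 0 < g)
    (C : Submodule (ZMod k) (Fin n → ZMod k)) (v : Fin n → ZMod k)
    (y : (Fin (g+1) → ZMod k) → ℂ) :
    JacHom (dualCode C) v y
      = (1 / (Fintype.card ↥C : ℂ) ^ g) *
        JacHom C v (fun a => ∑ c : Fin g → ZMod k,
          zmodChar k (∑ i : Fin g, a i.castSucc * c i) *
            y (Fin.snoc c (a (Fin.last g)))) := by
  classical
  have hcard : (Fintype.card ↥C : ℂ) ≠ 0 := Nat.cast_ne_zero.2 Fintype.card_ne_zero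
  have hR : JacHom C v (fun a => ∑ c : Fin g → ZMod k,
      zmodChar k (∑ i : Fin g, a i.castSucc * c i) * y (Fin.snoc c (a (Fin.last g))))
      = ∑ u : Fin g → ↥C, ∏ i : Fin n, ∑ c : Fin g → ZMod k,
          zmodChar k (∑ j : Fin g, (u j : Fin n → ZMod k) i * c j) * y (Fin.snoc c (v i)) := by
    rw [JacHom]
    refine Finset.sum_congr rfl fun u _ => ?_
    rw [jac_prod v _ (fun j => (u j : Fin n → ZMod k))]
    refine Finset.prod_congr rfl fun i _ => ?_
    simp only [Fin.snoc_castSucc, Fin.snoc_last]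
  have hL : JacHom (dualCode C) v y = ∑ w : Fin g → ↥(dualCode C), ∏ i : Fin n,
      y (Fin.snoc (fun j => (w j : Fin n → ZMod k) i) (v i)) := by
    rw [JacHom]
    exact Finset.sum_congr rfl fun w _ => jac_prod v y (fun j => (w j : Fin n → ZMod k))
  rw [hL, hR]
  have core : ∀ u : Fin g → ↥C,
      (∑ z : Fin g → (Fin n → ZMod k),
        (∏ j : Fin g, zmodChar k (∑ i : Fin n, (u j : Fin n → ZMod k) i * z j i))
          * ∏ i : Fin n, y (Fin.snoc (fun j => z j i) (v i)))
      = ∏ i : Fin n, ∑ c : Fin g → ZMod k,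
          zmodChar k (∑ j : Fin g, (u j : Fin n → ZMod k) i * c j) * y (Fin.snoc c (v i)) := by
    intro u
    set H : Fin n → (Fin g → ZMod k) → ℂ := fun i c =>
      zmodChar k (∑ j : Fin g, (u j : Fin n → ZMod k) i * c j) * y (Fin.snoc c (v i)) with hH
    have hterm : ∀ z : Fin g → (Fin n → ZMod k),
        (∏ j : Fin g, zmodChar k (∑ i : Fin n, (u j : Fin n → ZMod k) i * z j i))
          * ∏ i : Fin n, y (Fin.snoc (fun j => z j i) (v i))
        = ∏ i : Fin n, H i (fun j => z j i) := by
      intro z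
      have hx : (∏ j : Fin g, zmodChar k (∑ i : Fin n, (u j : Fin n → ZMod k) i * z j i))
          = ∏ i : Fin n, zmodChar k (∑ j : Fin g, (u j : Fin n → ZMod k) i * z j i) := by
        rw [← zmodChar_sum Finset.univ
            (fun j : Fin g => ∑ i : Fin n, (u j : Fin n → ZMod k) i * z j i),
          ← zmodChar_sum Finset.univ
            (fun i : Fin n => ∑ j : Fin g, (u j : Fin n → ZMod k) i * z j i),
          Finset.sum_comm]
      rw [hx, ← Finset.prod_mul_distrib]
    calc (∑ z : Fin g → (Fin n → ZMod k),
            (∏ j : Fin g, zmodChar k (∑ i : Fin n, (u j : Fin n → ZMod k) i * z j i))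
              * ∏ i : Fin n, y (Fin.snoc (fun j => z j i) (v i)))
        = ∑ z : Fin g → (Fin n → ZMod k), ∏ i : Fin n, H i (fun j => z j i) :=
          Finset.sum_congr rfl fun z _ => hterm z
      _ = ∑ x : Fin n → (Fin g → ZMod k), ∏ i : Fin n, H i (x i) :=
          Fintype.sum_equiv (Equiv.piComm (fun (_ : Fin g) (_ : Fin n) => ZMod k)) _ _
            (fun z => rfl)
      _ = ∑ x ∈ Fintype.piFinset (fun _ : Fin n => (Finset.univ : Finset (Fin g → ZMod k))),
            ∏ i : Fin n, H i (x i) := by rw [Fintype.piFinset_univ]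
      _ = ∏ i : Fin n, ∑ c : Fin g → ZMod k, H i c := (Finset.prod_univ_sum _ _).symm
  calc ∑ w : Fin g → ↥(dualCode C), ∏ i : Fin n,
          y (Fin.snoc (fun j => (w j : Fin n → ZMod k) i) (v i))
      = ∑ z ∈ Finset.univ.filter (fun z : Fin g → (Fin n → ZMod k) => ∀ j, z j ∈ dualCode C),
          ∏ i : Fin n, y (Fin.snoc (fun j => z j i) (v i)) :=
        sum_pi_subtype (fun x => x ∈ dualCode C)
          (fun z : Fin g → (Fin n → ZMod k) => ∀ j, z j ∈ dualCode C) (fun z => Iff.rfl)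
          (fun z => ∏ i : Fin n, y (Fin.snoc (fun j => z j i) (v i)))
    _ = ∑ z : Fin g → (Fin n → ZMod k),
          (if ∀ j, z j ∈ dualCode C then (1:ℂ) else 0)
            * ∏ i : Fin n, y (Fin.snoc (fun j => z j i) (v i)) := by
        rw [Finset.sum_filter]
        exact Finset.sum_congr rfl fun z _ => by split <;> simp
    _ = ∑ z : Fin g → (Fin n → ZMod k),
          ((Fintype.card ↥C : ℂ)⁻¹ ^ g * ∑ u : Fin g → ↥C, ∏ j : Fin g,
              zmodChar k (∑ i : Fin n, (u j : Fin n → ZMod k) i * z j i))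
            * ∏ i : Fin n, y (Fin.snoc (fun j => z j i) (v i)) := by
        refine Finset.sum_congr rfl fun z _ => ?_
        congr 1
        have hj : ∀ j : Fin g, (if z j ∈ dualCode C then (1:ℂ) else 0)
            = (Fintype.card ↥C : ℂ)⁻¹
              * ∑ u : ↥C, zmodChar k (∑ i, (u : Fin n → ZMod k) i * z j i) := by
          intro j
          rw [char_sum_code]
          split
          · rw [inv_mul_cancel₀ hcard]
          · rw [mul_zero]
        have hall : (Fintype.card ↥C : ℂ)⁻¹ ^ g * (∑ u : Fin g → ↥C, ∏ j : Fin g,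
              zmodChar k (∑ i : Fin n, (u j : Fin n → ZMod k) i * z j i))
            = ∏ j : Fin g, ((Fintype.card ↥C : ℂ)⁻¹
              * ∑ u : ↥C, zmodChar k (∑ i, (u : Fin n → ZMod k) i * z j i)) := by
          rw [Finset.prod_mul_distrib, Finset.prod_const, Finset.card_univ, Fintype.card_fin]
          congr 1
          rw [Finset.prod_univ_sum, Fintype.piFinset_univ]
        rw [hall, Finset.prod_congr rfl (fun j _ => (hj j).symm)]
        by_cases hz : ∀ j, z j ∈ dualCode C
        · rw [if_pos hz, Finset.prod_congr rfl (fun j _ => if_pos (hz j)),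
            Finset.prod_const, one_pow]
        · push_neg at hz
          obtain ⟨j0, hj0⟩ := hz
          rw [if_neg (by push_neg; exact ⟨j0, hj0⟩)]
          exact (Finset.prod_eq_zero (Finset.mem_univ j0)
            (if_neg hj0 : (if z j0 ∈ dualCode C then (1:ℂ) else 0) = 0)).symm
    _ = (Fintype.card ↥C : ℂ)⁻¹ ^ g * ∑ u : Fin g → ↥C,
          ∑ z : Fin g → (Fin n → ZMod k),
            (∏ j : Fin g, zmodChar k (∑ i : Fin n, (u j : Fin n → ZMod k) i * z j i))
              * ∏ i : Fin n, y (Fin.snoc (fun j => z j i) (v i)) := by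
        rw [Finset.sum_congr rfl (fun z (_ : z ∈ Finset.univ) => by
          rw [mul_assoc, Finset.sum_mul]), ← Finset.mul_sum]
        congr 1
        exact Finset.sum_comm
    _ = (1 / (Fintype.card ↥C : ℂ) ^ g) * ∑ u : Fin g → ↥C, ∏ i : Fin n,
          ∑ c : Fin g → ZMod k,
            zmodChar k (∑ j : Fin g, (u j : Fin n → ZMod k) i * c j)
              * y (Fin.snoc c (v i)) := by
        rw [one_div, ← inv_pow]
        exact congrArg _ (Finset.sum_congr rfl fun u _ => core u)
end
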